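/- If G is a d-degenerate graph, then its incidence graph I_G is (Δ(G) + 2d − 2)-degenerate. -/

import Mathlib

open SimpleGraph

variable {V : Type*}

/-- An incidence of a graph `G`: a pair `(v, e)` where `e` is an edge of `G` and `v ∈ e`. -/
def Inc (G : SimpleGraph V) : Type _ :=
  {p : V × Sym2 V // p.2 ∈ G.edgeSet ∧ p.1 ∈ p.2}

/-- The incidence graph `I_G` of `G`: vertices are incidences of `G`, with `(v,e)` and `(w,f)`
adjacent whenever they are distinct and `v = w`, or `e = f`, or the pair `vw` equals `e` or `f`. -/
def incGraph (G : SimpleGraph V) : SimpleGraph (Inc G) where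
  Adj a b := a ≠ b ∧ (a.1.1 = b.1.1 ∨ a.1.2 = b.1.2 ∨
      s(a.1.1, b.1.1) = a.1.2 ∨ s(a.1.1, b.1.1) = b.1.2)
  symm := by
    constructor
    rintro a b ⟨hab, h⟩
    refine ⟨hab.symm, ?_⟩
    rw [Sym2.eq_swap (a := b.1.1) (b := a.1.1)]
    rcases h with h | h | h | h
    · exact Or.inl h.symm
    · exact Or.inr (Or.inl h.symm)
    · exact Or.inr (Or.inr (Or.inr h))
    · exact Or.inr (Or.inr (Or.inl h))
  loopless := ⟨fun _ h => h.1 rfl⟩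

/-- `G` admits an incidence `p`-colouring. -/
def IncColorable (G : SimpleGraph V) (p : ℕ) : Prop :=
  (incGraph G).Colorable p

/-- `G` is incidence `k`-choosable. -/
def IncChoosable (G : SimpleGraph V) (k : ℕ) : Prop :=
  ∀ L : Inc G → Finset ℕ, (∀ i, (L i).card = k) →
    ∃ c : Inc G → ℕ, (∀ i, c i ∈ L i) ∧ ∀ i j, (incGraph G).Adj i j → c i ≠ c j

/-- The incidence chromatic number `χᵢ(G)`. -/
noncomputable def incChromaticNumber (G : SimpleGraph V) : ℕ :=
  sInf {p | IncColorable G p}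

/-- The incidence choice number `chᵢ(G)`. -/
noncomputable def incChoiceNumber (G : SimpleGraph V) : ℕ :=
  sInf {k | IncChoosable G k}

/-- The maximum degree `Δ(G)` of a finite graph. -/
noncomputable def maxDeg [Fintype V] (G : SimpleGraph V) : ℕ :=
  Finset.univ.sup fun v => (G.neighborSet v).ncard

/-- A graph is `d`-degenerate if every (finite, nonempty) subgraph has a vertex of degree
at most `d` within it. -/
def Degen {W : Type*} (H : SimpleGraph W) (d : ℕ) : Prop :=
  ∀ s : Set W, s.Finite → s.Nonempty → ∃ v ∈ s, (s ∩ H.neighborSet v).ncard ≤ d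

namespace Inc
variable {G : SimpleGraph V}

def vtx (i : Inc G) : V := i.1.1
def edg (i : Inc G) : Sym2 V := i.1.2
noncomputable def oth (i : Inc G) : V := Sym2.Mem.other i.2.2

lemma edg_eq (i : Inc G) : s(i.vtx, i.oth) = i.edg := Sym2.other_spec _

lemma adj (i : Inc G) : G.Adj i.vtx i.oth := by
  rw [← SimpleGraph.mem_edgeSet, edg_eq]; exact i.2.1

lemma ext' {i j : Inc G} (h1 : i.vtx = j.vtx) (h2 : i.oth = j.oth) : i = j := by
  apply Subtype.ext
  apply Prod.ext_iff.mpr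
  refine ⟨h1, ?_⟩
  rw [show i.1.2 = i.edg from rfl, show j.1.2 = j.edg from rfl, ← i.edg_eq, ← j.edg_eq, h1, h2]

end Inc

instance instFiniteInc [Fintype V] {G : SimpleGraph V} : Finite (Inc G) := by
  unfold Inc; infer_instance

lemma incGraph_adj {G : SimpleGraph V} {a b : Inc G} :
    (incGraph G).Adj a b ↔ a ≠ b ∧ (a.vtx = b.vtx ∨ a.edg = b.edg ∨
      s(a.vtx, b.vtx) = a.edg ∨ s(a.vtx, b.vtx) = b.edg) := Iff.rfl

lemma exists_rank (G : SimpleGraph V) (d : ℕ) (hG : Degen G d) (s : Finset V) :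
    ∃ f : V → ℕ, (∀ x ∈ s, f x < s.card) ∧ Set.InjOn f ↑s ∧
      ∀ x ∈ s, {w | w ∈ s ∧ G.Adj x w ∧ f w < f x}.ncard ≤ d := by
  classical
  induction s using Finset.strongInduction with
  | _ s ih =>
    rcases s.eq_empty_or_nonempty with rfl | hs
    · exact ⟨fun _ => 0, by simp, by simp, by simp⟩
    · obtain ⟨v, hv, hvd⟩ := hG ↑s s.finite_toSet (by exact_mod_cast hs)
      have hv' : v ∈ s := by exact_mod_cast hv
      obtain ⟨f, hbd, hinj, hdeg⟩ := ih (s.erase v) (Finset.erase_ssubset hv')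
      have hcard : (s.erase v).card + 1 = s.card := Finset.card_erase_add_one hv'
      refine ⟨Function.update f v (s.erase v).card, ?_, ?_, ?_⟩
      · intro x hx
        rcases eq_or_ne x v with rfl | hxv
        · rw [Function.update_self]; omega
        · rw [Function.update_of_ne hxv]
          have := hbd x (Finset.mem_erase.mpr ⟨hxv, hx⟩); omega
      · intro a ha b hb hab
        simp only [Function.update_apply] at hab
        have ha' : a ∈ s := by exact_mod_cast ha
        have hb' : b ∈ s := by exact_mod_cast hb
        by_cases hav : a = v
        · by_cases hbv : b = v
          · rw [hav, hbv]
          · exfalso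
            rw [if_pos hav, if_neg hbv] at hab
            have := hbd b (Finset.mem_erase.mpr ⟨hbv, hb'⟩); omega
        · by_cases hbv : b = v
          · exfalso
            rw [if_neg hav, if_pos hbv] at hab
            have := hbd a (Finset.mem_erase.mpr ⟨hav, ha'⟩); omega
          · rw [if_neg hav, if_neg hbv] at hab
            exact hinj (by simp [Finset.mem_erase, hav, ha'])
              (by simp [Finset.mem_erase, hbv, hb']) hab
      · intro x hx
        rcases eq_or_ne x v with rfl | hxv
        · refine le_trans (Set.ncard_le_ncard ?_ (s.finite_toSet.inter_of_left _)) hvd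
          rintro w ⟨hw1, hw2, _⟩
          exact ⟨by exact_mod_cast hw1, hw2⟩
        · have hxe : x ∈ s.erase v := Finset.mem_erase.mpr ⟨hxv, hx⟩
          have hset : {w | w ∈ s ∧ G.Adj x w ∧
                Function.update f v (s.erase v).card w < Function.update f v (s.erase v).card x}
              = {w | w ∈ s.erase v ∧ G.Adj x w ∧ f w < f x} := by
            ext w
            simp only [Set.mem_setOf_eq, Function.update_apply, if_neg hxv, Finset.mem_erase]
            constructor
            · rintro ⟨hw1, hw2, hw3⟩
              split_ifs at hw3 with hwv
              · exfalso; have := hbd x hxe; omega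
              · exact ⟨⟨hwv, hw1⟩, hw2, hw3⟩
            · rintro ⟨⟨hwv, hw1⟩, hw2, hw3⟩
              rw [if_neg hwv]
              exact ⟨hw1, hw2, hw3⟩
          rw [hset]
          exact hdeg x hxe

theorem stmt9 [Fintype V] (G : SimpleGraph V) (d : ℕ) (hG : Degen G d) :
    Degen (incGraph G) (maxDeg G + 2 * d - 2) := by
  classical
  intro S hSfin hSne
  obtain ⟨f, hfbd, hinjOn, hdeg⟩ := exists_rank G d hG Finset.univ
  have hinj : Function.Injective f := fun a b h =>
    hinjOn (Finset.mem_coe.mpr (Finset.mem_univ a)) (Finset.mem_coe.mpr (Finset.mem_univ b)) h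
  have hB : ∀ x : V, {w | G.Adj x w ∧ f w < f x}.ncard ≤ d := by
    intro x
    have h := hdeg x (Finset.mem_univ x)
    have he : {w | w ∈ Finset.univ ∧ G.Adj x w ∧ f w < f x} = {w | G.Adj x w ∧ f w < f x} := by
      ext w; simp
    rwa [he] at h
  have hND : ∀ z : V, (G.neighborSet z).ncard ≤ maxDeg G := by
    intro z
    unfold maxDeg
    exact Finset.le_sup (f := fun v => (G.neighborSet v).ncard) (Finset.mem_univ z)
  set b : Inc G → ℕ := fun i => if f i.oth < f i.vtx then 0 else 1 with hbdef
  set κ : Inc G → ℕ ×ₗ (ℕ ×ₗ ℕ) := fun i => toLex (f i.vtx, toLex (b i, f i.oth)) with hkdef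
  have hκinj : Function.Injective κ := by
    intro i j hij
    have h1 : f i.vtx = f j.vtx := congrArg (fun p => (ofLex p).1) hij
    have h2 : f i.oth = f j.oth := congrArg (fun p => (ofLex (ofLex p).2).2) hij
    exact Inc.ext' (hinj h1) (hinj h2)
  obtain ⟨i₀, hi₀, hmax⟩ := Set.Finite.exists_maximalFor κ S hSfin hSne
  refine ⟨i₀, hi₀, ?_⟩
  have hlt : ∀ j ∈ S, j ≠ i₀ → κ j < κ i₀ := by
    intro j hj hne
    rcases lt_or_ge (κ j) (κ i₀) with h | h
    · exact h
    · exact absurd (hκinj (le_antisymm h (hmax hj h))).symm hne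
  have hk1 : ∀ j : Inc G, κ j < κ i₀ → f j.vtx < f i₀.vtx ∨
      (f j.vtx = f i₀.vtx ∧ (b j < b i₀ ∨ (b j = b i₀ ∧ f j.oth < f i₀.oth))) := by
    intro j h
    simp only [hkdef] at h
    rcases Prod.Lex.lt_iff.mp h with h' | ⟨h1, h2⟩
    · exact Or.inl h'
    · refine Or.inr ⟨h1, ?_⟩
      rcases Prod.Lex.lt_iff.mp h2 with h' | ⟨h3, h4⟩
      · exact Or.inl h'
      · exact Or.inr ⟨h3, h4⟩
  set x := i₀.vtx with hxdef
  set y := i₀.oth with hydef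
  have hadjxy : G.Adj x y := i₀.adj
  -- the three classes
  set C1 : Set (Inc G) := {j | j.vtx = x ∧ j ≠ i₀ ∧ κ j < κ i₀} with hC1def
  set C2 : Set (Inc G) := {j | j.vtx = y ∧ κ j < κ i₀} with hC2def
  set C3 : Set (Inc G) := {j | j.vtx ≠ x ∧ j.vtx ≠ y ∧ j.oth = x ∧ κ j < κ i₀} with hC3def
  have hsub : S ∩ (incGraph G).neighborSet i₀ ⊆ C1 ∪ C2 ∪ C3 := by
    rintro j ⟨hjS, hjN⟩
    rw [SimpleGraph.mem_neighborSet, incGraph_adj] at hjN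
    obtain ⟨hne0, hcase⟩ := hjN
    have hjlt : κ j < κ i₀ := hlt j hjS (Ne.symm hne0)
    have hC1m : j.vtx = x → j ∈ C1 ∪ C2 ∪ C3 := fun h =>
      Or.inl (Or.inl ⟨h, Ne.symm hne0, hjlt⟩)
    have hC2m : j.vtx = y → j ∈ C1 ∪ C2 ∪ C3 := fun h => Or.inl (Or.inr ⟨h, hjlt⟩)
    rcases hcase with h | h | h | h
    · exact hC1m h.symm
    · have hmem : j.vtx ∈ i₀.edg := h ▸ j.2.2
      rw [← i₀.edg_eq, Sym2.mem_iff] at hmem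
      rcases hmem with h' | h'
      · exact hC1m h'
      · exact hC2m h'
    · rw [← i₀.edg_eq] at h
      exact hC2m ((Sym2.congr_right).mp h)
    · have hmem : x ∈ j.edg := by rw [← h]; exact Sym2.mem_mk_left x j.vtx
      rw [← j.edg_eq, Sym2.mem_iff] at hmem
      rcases hmem with h' | h'
      · exact hC1m h'.symm
      · rcases eq_or_ne j.vtx x with h1 | h1
        · exact hC1m h1
        rcases eq_or_ne j.vtx y with h2 | h2
        · exact hC2m h2
        · exact Or.inr ⟨h1, h2, h'.symm, hjlt⟩
  have hstart : (S ∩ (incGraph G).neighborSet i₀).ncard ≤ C1.ncard + C2.ncard + C3.ncard := by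
    refine le_trans (Set.ncard_le_ncard hsub (Set.toFinite _)) ?_
    refine le_trans (Set.ncard_union_le _ _) ?_
    exact add_le_add_left (Set.ncard_union_le _ _) _
  -- facts used in both cases
  have hyx : y ≠ x := hadjxy.ne'
  by_cases hb : f y < f x
  -- DOWN case
  · have hbi₀ : b i₀ = 0 := by simp only [hbdef, ← hxdef, ← hydef, if_pos hb]
    have hC1bd : C1.ncard ≤ ({w | G.Adj x w ∧ f w < f x} \ {y}).ncard := by
      refine Set.ncard_le_ncard_of_injOn Inc.oth ?_ ?_ (Set.toFinite _)
      · rintro j ⟨hjv, hjne, hjlt⟩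
        rcases hk1 j hjlt with h | ⟨-, h⟩
        · rw [hjv] at h; exact absurd h (lt_irrefl _)
        · rw [hbi₀] at h
          rcases h with h' | ⟨hb0, h'⟩
          · omega
          · have hcond : f j.oth < f j.vtx := by
              by_contra hc
              simp only [hbdef] at hb0
              rw [if_neg hc] at hb0
              omega
            rw [hjv] at hcond
            refine ⟨⟨?_, hcond⟩, ?_⟩
            · rw [← hjv]; exact j.adj
            · intro hy'
              rw [Set.mem_singleton_iff] at hy'
              rw [hy'] at h'
              exact absurd h' (lt_irrefl _)
      · rintro j ⟨hjv, -, -⟩ j' ⟨hjv', -, -⟩ hoo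
        exact Inc.ext' (hjv.trans hjv'.symm) hoo
    have hC2bd : C2.ncard ≤ (G.neighborSet y).ncard := by
      refine Set.ncard_le_ncard_of_injOn Inc.oth ?_ ?_ (Set.toFinite _)
      · rintro j ⟨hjv, -⟩
        show G.Adj y j.oth
        rw [← hjv]; exact j.adj
      · rintro j ⟨hjv, -⟩ j' ⟨hjv', -⟩ hoo
        exact Inc.ext' (hjv.trans hjv'.symm) hoo
    have hC3bd : C3.ncard ≤ ({w | G.Adj x w ∧ f w < f x} \ {y}).ncard := by
      refine Set.ncard_le_ncard_of_injOn Inc.vtx ?_ ?_ (Set.toFinite _)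
      · rintro j ⟨hj1, hj2, hj3, hjlt⟩
        rcases hk1 j hjlt with h | ⟨h, -⟩
        · refine ⟨⟨?_, h⟩, hj2⟩
          have := j.adj
          rw [hj3] at this
          exact this.symm
        · exact absurd (hinj h) hj1
      · rintro j ⟨-, -, hj3, -⟩ j' ⟨-, -, hj3', -⟩ hvv
        exact Inc.ext' hvv (hj3.trans hj3'.symm)
    have hBx : {w | G.Adj x w ∧ f w < f x}.ncard ≤ d := hB x
    have hyBx : y ∈ {w | G.Adj x w ∧ f w < f x} := ⟨hadjxy, hb⟩
    have hBpos : 0 < {w | G.Adj x w ∧ f w < f x}.ncard :=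
      (Set.ncard_pos (Set.toFinite _)).mpr ⟨y, hyBx⟩
    have hdiffc : ({w | G.Adj x w ∧ f w < f x} \ {y}).ncard
        = {w | G.Adj x w ∧ f w < f x}.ncard - 1 :=
      Set.ncard_diff_singleton_of_mem hyBx
    have hNy : (G.neighborSet y).ncard ≤ maxDeg G := hND y
    omega
  -- UP case
  · have hfxy : f x < f y :=
      lt_of_le_of_ne (not_lt.mp hb) (fun h => hyx (hinj h.symm))
    have hC1bd : C1.ncard ≤ (G.neighborSet x \ {y}).ncard := by
      refine Set.ncard_le_ncard_of_injOn Inc.oth ?_ ?_ (Set.toFinite _)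
      · rintro j ⟨hjv, hjne, -⟩
        refine ⟨by rw [SimpleGraph.mem_neighborSet, ← hjv]; exact j.adj, ?_⟩
        intro hy'
        rw [Set.mem_singleton_iff] at hy'
        exact hjne (Inc.ext' hjv hy')
      · rintro j ⟨hjv, -, -⟩ j' ⟨hjv', -, -⟩ hoo
        exact Inc.ext' (hjv.trans hjv'.symm) hoo
    have hC2bd : C2 = ∅ := by
      rw [Set.eq_empty_iff_forall_notMem]
      rintro j ⟨hjv, hjlt⟩
      rcases hk1 j hjlt with h | ⟨h, -⟩
      · rw [hjv] at h; omega
      · rw [hjv] at h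
        exact hyx (hinj h)
    have hC3bd : C3.ncard ≤ {w | G.Adj x w ∧ f w < f x}.ncard := by
      refine Set.ncard_le_ncard_of_injOn Inc.vtx ?_ ?_ (Set.toFinite _)
      · rintro j ⟨hj1, hj2, hj3, hjlt⟩
        rcases hk1 j hjlt with h | ⟨h, -⟩
        · refine ⟨?_, h⟩
          have := j.adj
          rw [hj3] at this
          exact this.symm
        · exact absurd (hinj h) hj1
      · rintro j ⟨-, -, hj3, -⟩ j' ⟨-, -, hj3', -⟩ hvv
        exact Inc.ext' hvv (hj3.trans hj3'.symm)
    have hBx : {w | G.Adj x w ∧ f w < f x}.ncard ≤ d := hB x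
    have hBy : {w | G.Adj y w ∧ f w < f y}.ncard ≤ d := hB y
    have hxBy : x ∈ {w | G.Adj y w ∧ f w < f y} := ⟨hadjxy.symm, hfxy⟩
    have hBypos : 0 < {w | G.Adj y w ∧ f w < f y}.ncard :=
      (Set.ncard_pos (Set.toFinite _)).mpr ⟨x, hxBy⟩
    have hyNx : y ∈ G.neighborSet x := hadjxy
    have hNxpos : 0 < (G.neighborSet x).ncard := (Set.ncard_pos (Set.toFinite _)).mpr ⟨y, hyNx⟩
    have hdiffc : (G.neighborSet x \ {y}).ncard = (G.neighborSet x).ncard - 1 :=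
      Set.ncard_diff_singleton_of_mem hyNx
    have hNx : (G.neighborSet x).ncard ≤ maxDeg G := hND x
    have hC2z : C2.ncard = 0 := by rw [hC2bd]; exact Set.ncard_empty _
    omega
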